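/- Let p be a prime with p − 1 = 4m for some integer m that is odd and not squarefree, and let p > 2117 (= 46² + 1). Let S be the SLCE almost difference set over 𝔽_p^*. Then the multiplier group of S is trivial: every unit t of ℤ/(p-1)ℤ that is a multiplier of S equals 1. -/

import Mathlib

open Finset

-- Sum of x^n over all of ZMod p
lemma slce_sum_pow (p : ℕ) [Fact p.Prime] (n : ℕ) (hn : n ≠ 0) :
    (∑ x : ZMod p, x ^ n) = if (p - 1) ∣ n then (-1 : ZMod p) else 0 := by
  classical
  let φ : (ZMod p)ˣ ↪ ZMod p := ⟨Units.val, Units.val_injective⟩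
  have huniv : (univ.map φ) = univ \ {0} := by
    ext x
    simpa only [mem_map, mem_univ, Function.Embedding.coeFn_mk, true_and, mem_sdiff,
      mem_singleton, φ, IsUnit, ne_eq] using isUnit_iff_ne_zero
  calc
    ∑ x : ZMod p, x ^ n = ∑ x ∈ univ \ {(0 : ZMod p)}, x ^ n := by
      rw [← sum_sdiff ({0} : Finset (ZMod p)).subset_univ, sum_singleton, zero_pow hn, add_zero]
    _ = ∑ x : (ZMod p)ˣ, ((x : ZMod p)) ^ n := by
      simp [φ, ← huniv, univ.sum_map φ]
    _ = if (p - 1) ∣ n then (-1 : ZMod p) else 0 := by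
      have := FiniteField.sum_pow_units (ZMod p) n
      rw [ZMod.card p] at this
      simpa using this

-- power reduction mod p-1
lemma slce_pow_modeq (p : ℕ) [Fact p.Prime] {x : ZMod p} (hx : x ≠ 0) {a b : ℕ}
    (hab : a ≡ b [MOD p - 1]) : x ^ a = x ^ b := by
  have h1 : ∀ c : ℕ, x ^ c = x ^ (c % (p - 1)) := by
    intro c
    conv_lhs => rw [← Nat.div_add_mod c (p - 1)]
    rw [pow_add, pow_mul, ZMod.pow_card_sub_one_eq_one hx, one_pow, one_mul]
  rw [h1 a, h1 b, hab]

open Finset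

lemma slce_key (p : ℕ) [Fact p.Prime] (h : ℕ) (hp2 : p = 2 * h + 1) (hh : 3 ≤ h)
    (S : Set (ZMod p)) (hS : S = {x : ZMod p | x ≠ 0 ∧ ¬ IsSquare (x + 1)})
    (k j : ℕ) (hk1 : 1 ≤ k) (hkj : k + j = 2 * h) (hj1 : 1 ≤ j) :
    (2 : ZMod p) * ∑ x ∈ (Set.toFinite S).toFinset, x ^ k
      = (if h ≤ k then ((h.choose j : ℕ) : ZMod p) else 0) - (-1) ^ k := by
  classical
  have hp1 : p - 1 = 2 * h := by omega
  have hmem : ∀ x : ZMod p, x ∈ (Set.toFinite S).toFinset ↔ x ≠ 0 ∧ ¬ IsSquare (x + 1) := by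
    intro x; rw [Set.Finite.mem_toFinset, hS]; rfl
  have hneg1 : (-1 : ZMod p) ≠ 0 := neg_ne_zero.mpr one_ne_zero
  have hone : (1 : ZMod p) ≠ -1 := by
    intro hcon
    have h2 : ((2 : ℕ) : ZMod p) = 0 := by push_cast; linear_combination hcon
    rw [ZMod.natCast_eq_zero_iff] at h2
    have := Nat.le_of_dvd (by norm_num) h2
    omega
  -- pointwise identity
  have hpoint : ∀ x : ZMod p,
      (if x ∈ (Set.toFinite S).toFinset then (2 : ZMod p) * x ^ k else 0)
        = x ^ k * (1 - (x + 1) ^ h) - (if x = -1 then (-1 : ZMod p) ^ k else 0) := by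
    intro x
    by_cases hx0 : x = 0
    · subst hx0
      rw [if_neg (by rw [hmem]; tauto), if_neg (by intro hcon; exact hneg1 hcon.symm),
        zero_pow (by omega), zero_mul, sub_zero]
    by_cases hx1 : x = -1
    · subst hx1
      rw [if_neg (fun hcon => ((hmem _).mp hcon).2
          (by rw [neg_add_cancel]; exact ⟨0, (mul_zero 0).symm⟩)),
        if_pos rfl, neg_add_cancel, zero_pow (by omega : h ≠ 0), sub_zero, mul_one, sub_self]
    · have hadd : x + 1 ≠ 0 := fun hcon => hx1 (by linear_combination hcon)
      have hsq : ((x+1)^h) * ((x+1)^h) = 1 := by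
        rw [← pow_add]
        have : h + h = p - 1 := by omega
        rw [this, ZMod.pow_card_sub_one_eq_one hadd]
      have heuler : IsSquare (x+1) ↔ (x+1) ^ h = 1 := by
        have := ZMod.euler_criterion p hadd
        rwa [show p / 2 = h by omega] at this
      rcases mul_self_eq_one_iff.mp hsq with h1 | h1
      · rw [if_neg (by rw [hmem]; intro hcon; exact hcon.2 (heuler.mpr h1)), if_neg hx1,
          h1, sub_self, mul_zero, sub_zero]
      · rw [if_pos (by rw [hmem]; exact ⟨hx0, fun hcon => hone (((heuler.mp hcon).symm).trans h1)⟩), if_neg hx1, h1]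
        ring
  have hsum : (2 : ZMod p) * ∑ x ∈ (Set.toFinite S).toFinset, x ^ k
      = ∑ x : ZMod p, (x ^ k * (1 - (x + 1) ^ h) - (if x = -1 then (-1 : ZMod p) ^ k else 0)) := by
    calc (2 : ZMod p) * ∑ x ∈ (Set.toFinite S).toFinset, x ^ k
        = ∑ x ∈ (Set.toFinite S).toFinset, (2 : ZMod p) * x ^ k := mul_sum _ _ _
      _ = ∑ x : ZMod p, (if x ∈ (Set.toFinite S).toFinset then (2 : ZMod p) * x ^ k else 0) := by
          rw [sum_ite_mem, univ_inter]
      _ = _ := sum_congr rfl (fun x _ => hpoint x)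
  rw [hsum]
  rw [sum_sub_distrib]
  have hcorr : ∑ x : ZMod p, (if x = -1 then (-1 : ZMod p) ^ k else 0) = (-1 : ZMod p) ^ k := by
    rw [sum_ite_eq' univ (-1 : ZMod p) (fun _ => (-1 : ZMod p) ^ k)]
    exact if_pos (mem_univ _)
  rw [hcorr]
  congr 1
  -- main sum
  have hexpand : ∀ x : ZMod p, x ^ k * (1 - (x+1) ^ h)
      = x ^ k - ∑ i ∈ range (h+1), x ^ (k+i) * (h.choose i : ZMod p) := by
    intro x
    rw [add_pow x 1 h]
    rw [mul_sub, mul_one, mul_sum]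
    congr 1
    apply sum_congr rfl
    intro i _
    rw [one_pow, mul_one, pow_add]
    ring
  rw [sum_congr rfl (fun x _ => hexpand x), sum_sub_distrib]
  have hzero : ∑ x : ZMod p, x ^ k = 0 := by
    have := FiniteField.sum_pow_lt_card_sub_one (ZMod p) k (by rw [ZMod.card]; omega)
    exact this
  rw [hzero, zero_sub]
  rw [sum_comm]
  have hterm : ∀ i, i ∈ range (h+1) →
      (∑ x : ZMod p, x ^ (k+i) * (h.choose i : ZMod p))
        = (if (2*h) ∣ (k+i) then (-1 : ZMod p) else 0) * (h.choose i : ZMod p) := by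
    intro i _
    rw [← sum_mul]
    congr 1
    have := slce_sum_pow p (k+i) (by omega)
    rwa [hp1] at this
  rw [sum_congr rfl hterm]
  by_cases hhk : h ≤ k
  · rw [if_pos hhk]
    rw [sum_eq_single j]
    · rw [if_pos ⟨1, by omega⟩]; ring
    · intro i hi hij
      rw [mem_range] at hi
      rw [if_neg, zero_mul]
      rintro ⟨c, hc⟩
      have hcb : c ≤ 1 := by
        by_contra hcb
        have : 2*h*2 ≤ 2*h*c := Nat.mul_le_mul_left _ (by omega)
        omega
      interval_cases c <;> omega
    · intro hcon
      exact absurd (mem_range.mpr (by omega)) hcon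
  · rw [if_neg hhk]
    rw [sum_eq_zero, neg_zero]
    intro i hi
    rw [mem_range] at hi
    rw [if_neg, zero_mul]
    rintro ⟨c, hc⟩
    have hcb : c ≤ 1 := by
      by_contra hcb
      have : 2*h*2 ≤ 2*h*c := Nat.mul_le_mul_left _ (by omega)
      omega
    interval_cases c <;> omega

open Finset

lemma slce_mult_eq (p : ℕ) [Fact p.Prime] (S : Set (ZMod p))
    (hS : S = {x : ZMod p | x ≠ 0 ∧ ¬ IsSquare (x + 1)})
    (g : ZMod p) (hg : g ≠ 0) (T T' : ℕ)
    (hTT' : T * T' ≡ 1 [MOD p - 1])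
    (himg : (fun x : ZMod p => x ^ T) '' S = (fun s => g * s) '' S)
    (a b : ℕ) (hab : a ≡ T * b [MOD p - 1]) :
    ∑ x ∈ (Set.toFinite S).toFinset, x ^ a
      = g ^ b * ∑ x ∈ (Set.toFinite S).toFinset, x ^ b := by
  classical
  have hne : ∀ x ∈ (Set.toFinite S).toFinset, x ≠ (0 : ZMod p) := by
    intro x hx
    rw [Set.Finite.mem_toFinset, hS] at hx
    exact hx.1
  have hid : ∀ z : ZMod p, z ≠ 0 → (z ^ T) ^ T' = z := by
    intro z hz
    rw [← pow_mul]
    have := slce_pow_modeq p hz hTT'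
    rwa [pow_one] at this
  have hinj : ∀ x ∈ (Set.toFinite S).toFinset, ∀ y ∈ (Set.toFinite S).toFinset,
      x ^ T = y ^ T → x = y := by
    intro x hx y hy hxy
    rw [← hid x (hne x hx), ← hid y (hne y hy), hxy]
  have himgF : (Set.toFinite S).toFinset.image (fun x => x ^ T)
      = (Set.toFinite S).toFinset.image (fun x => g * x) := by
    ext y
    simp only [Finset.mem_image, Set.Finite.mem_toFinset]
    constructor
    · rintro ⟨x, hx, rfl⟩
      have hy : (fun x : ZMod p => x ^ T) x ∈ (fun x : ZMod p => x ^ T) '' S :=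
        Set.mem_image_of_mem _ hx
      rw [himg] at hy
      obtain ⟨z, hz, hzz⟩ := hy
      exact ⟨z, hz, hzz⟩
    · rintro ⟨x, hx, rfl⟩
      have hy : (fun s : ZMod p => g * s) x ∈ (fun s : ZMod p => g * s) '' S :=
        Set.mem_image_of_mem _ hx
      rw [← himg] at hy
      obtain ⟨z, hz, hzz⟩ := hy
      exact ⟨z, hz, hzz⟩
  have hinj2 : ∀ x ∈ (Set.toFinite S).toFinset, ∀ y ∈ (Set.toFinite S).toFinset,
      g * x = g * y → x = y := by
    intro x _ y _ hxy
    exact mul_left_cancel₀ hg hxy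
  calc
    ∑ x ∈ (Set.toFinite S).toFinset, x ^ a
        = ∑ x ∈ (Set.toFinite S).toFinset, (x ^ T) ^ b := by
          apply sum_congr rfl
          intro x hx
          rw [← pow_mul]
          exact slce_pow_modeq p (hne x hx) hab
    _ = ∑ y ∈ (Set.toFinite S).toFinset.image (fun x => x ^ T), y ^ b :=
          (sum_image hinj).symm
    _ = ∑ y ∈ (Set.toFinite S).toFinset.image (fun x => g * x), y ^ b := by rw [himgF]
    _ = ∑ x ∈ (Set.toFinite S).toFinset, (g * x) ^ b := sum_image hinj2
    _ = g ^ b * ∑ x ∈ (Set.toFinite S).toFinset, x ^ b := by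
          rw [mul_sum]
          exact sum_congr rfl (fun x _ => mul_pow g x b)

/-- For a prime `p` with `p - 1 = 4m`, `m` odd and not squarefree,
`p > 2117`, the multiplier group of the SLCE almost difference set over `𝔽_p^*`
is trivial. -/
theorem slce_multiplier_group_trivial_not_squarefree
    (p m : ℕ) (hp : p.Prime) (hm : p - 1 = 4 * m) (hmodd : Odd m)
    (hmsf : ¬ Squarefree m) (hbig : 2117 < p)
    (S : Set (ZMod p)) (hS : S = {x : ZMod p | x ≠ 0 ∧ ¬ IsSquare (x + 1)})
    (t : (ZMod (p - 1))ˣ)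
    (ht : ∃ g : ZMod p, g ≠ 0 ∧
      (fun x : ZMod p => x ^ ((t : ZMod (p - 1)).val)) '' S = (fun s => g * s) '' S) :
    t = 1 := by
  classical
  haveI hfact : Fact p.Prime := ⟨hp⟩
  obtain ⟨h, hp2⟩ : ∃ h, p = 2 * h + 1 := by
    rcases hp.eq_two_or_odd' with h2 | hodd
    · omega
    · obtain ⟨h, hh⟩ := hodd
      exact ⟨h, hh⟩
  have hh : 1000 ≤ h := by omega
  have hp1 : p - 1 = 2 * h := by omega
  haveI : NeZero (p - 1) := ⟨by omega⟩
  obtain ⟨g, hg, himg⟩ := ht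
  set T : ℕ := (t : ZMod (p - 1)).val with hTdef
  have hTcop : Nat.Coprime T (p - 1) := ZMod.val_coe_unit_coprime t
  have hTlt : T < p - 1 := ZMod.val_lt _
  have hT0 : T ≠ 0 := by
    intro h0
    rw [h0] at hTcop
    have := Nat.coprime_zero_left (p - 1) |>.mp hTcop
    omega
  have hTodd : T % 2 = 1 := by
    rcases Nat.even_or_odd T with he | ho
    · exfalso
      obtain ⟨c, hc⟩ := he
      have h2T : 2 ∣ T := ⟨c, by omega⟩
      have h2p : 2 ∣ (p - 1) := ⟨h, hp1⟩
      have := Nat.dvd_gcd h2T h2p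
      rw [Nat.Coprime] at hTcop
      omega
    · exact Nat.odd_iff.mp ho
  -- reduce goal to T = 1
  suffices hT1 : T = 1 by
    have hval : ((T : ℕ) : ZMod (p - 1)) = (t : ZMod (p - 1)) := by
      rw [hTdef, ZMod.natCast_val, ZMod.cast_id]
    apply Units.ext
    rw [← hval, hT1]
    norm_num
  by_contra hT1
  -- inverse exponent
  set T' : ℕ := ((t⁻¹ : (ZMod (p - 1))ˣ) : ZMod (p - 1)).val with hT'def
  have hTT' : T * T' ≡ 1 [MOD p - 1] := by
    rw [← ZMod.natCast_eq_natCast_iff]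
    push_cast
    rw [hTdef, hT'def, ZMod.natCast_val, ZMod.cast_id, ZMod.natCast_val, ZMod.cast_id,
      ← Units.val_mul, mul_inv_cancel, Units.val_one]
  -- power sums
  set P : ℕ → ZMod p := fun k => ∑ x ∈ (Set.toFinite S).toFinset, x ^ k with hPdef
  have key : ∀ k j : ℕ, 1 ≤ k → k + j = 2 * h → 1 ≤ j →
      (2 : ZMod p) * P k = (if h ≤ k then ((h.choose j : ℕ) : ZMod p) else 0) - (-1) ^ k :=
    fun k j hk1 hkj hj1 => slce_key p h hp2 (by omega) S hS k j hk1 hkj hj1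
  have meq : ∀ a b : ℕ, a ≡ T * b [MOD p - 1] → P a = g ^ b * P b :=
    fun a b hab => slce_mult_eq p S hS g hg T T' hTT' himg a b hab
  -- basic cast fact : 2 * h = -1 in ZMod p
  have hc : (2 : ZMod p) * ((h : ℕ) : ZMod p) = -1 := by
    have hp0 : ((2 * h + 1 : ℕ) : ZMod p) = 0 := by
      rw [← hp2]; exact ZMod.natCast_self p
    push_cast at hp0
    linear_combination hp0
  have hQ1 : (2 : ZMod p) * P 1 = 1 := by
    have := key 1 (2 * h - 1) (by omega) (by omega) (by omega)
    rw [if_neg (by omega), pow_one, zero_sub, neg_neg] at this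
    exact this
  have hQ2 : (2 : ZMod p) * P 2 = -1 := by
    have := key 2 (2 * h - 2) (by omega) (by omega) (by omega)
    rw [if_neg (by omega), Even.neg_one_pow ⟨1, rfl⟩, zero_sub] at this
    exact this
  -- three cases on T
  rcases lt_trichotomy T h with hTh | hTh | hTh
  · -- case T < h : first g = 1
    have e1 := meq T 1 (by rw [mul_one])
    have hQT : (2 : ZMod p) * P T = 1 := by
      have := key T (2 * h - T) (by omega) (by omega) (by omega)
      rw [if_neg (by omega), Odd.neg_one_pow (Nat.odd_iff.mpr hTodd), zero_sub, neg_neg] at this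
      exact this
    have hgone : g = 1 := by
      linear_combination hQT - 2 * e1 - g * hQ1
    obtain ⟨q, r, hqr, hrT⟩ : ∃ q r : ℕ, T * q + r = h + T - 1 ∧ r < T :=
      ⟨(h + T - 1) / T, (h + T - 1) % T, Nat.div_add_mod _ _, Nat.mod_lt _ (by omega)⟩
    have hTq1 : h ≤ T * q := by omega
    have hTq2 : T * q ≤ 2 * h - 2 := by omega
    have hT3 : 3 ≤ T := by omega
    have hTqh : T * q ≠ h := by
      intro hcon
      have hdvd : T ∣ p - 1 := ⟨2 * q, by rw [show T * (2 * q) = 2 * (T * q) by ring]; omega⟩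
      have := Nat.gcd_eq_left hdvd
      rw [Nat.Coprime] at hTcop
      omega
    have hq1 : 1 ≤ q := by
      rcases Nat.eq_zero_or_pos q with h0 | h1
      · subst h0; omega
      · exact h1
    have hqh : q < h := by
      have h3q : 3 * q ≤ T * q := Nat.mul_le_mul_right q hT3
      omega
    have e2 := meq (T * q) q (Nat.ModEq.refl _)
    have hQq : (2 : ZMod p) * P q = -(-1 : ZMod p) ^ q := by
      have := key q (2 * h - q) (by omega) (by omega) (by omega)
      rw [if_neg (by omega), zero_sub] at this
      exact this
    have hQTq : (2 : ZMod p) * P (T * q)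
        = ((h.choose (2 * h - T * q) : ℕ) : ZMod p) - (-1 : ZMod p) ^ q := by
      have := key (T * q) (2 * h - T * q) (by omega) (by omega) (by omega)
      rw [if_pos (by omega), pow_mul, Odd.neg_one_pow (Nat.odd_iff.mpr hTodd)] at this
      exact this
    have hC0 : ((h.choose (2 * h - T * q) : ℕ) : ZMod p) = 0 := by
      rw [hgone, one_pow, one_mul] at e2
      linear_combination -hQTq + hQq + 2 * e2
    have hdvd : p ∣ h.choose (2 * h - T * q) :=
      (ZMod.natCast_eq_zero_iff _ _).mp hC0
    have hdvdfact : p ∣ h.factorial := by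
      have hmain := Nat.choose_mul_factorial_mul_factorial
        (show 2 * h - T * q ≤ h by omega)
      rw [← hmain]
      exact Dvd.dvd.mul_right (Dvd.dvd.mul_right hdvd _) _
    have := (Nat.Prime.dvd_factorial hp).mp hdvdfact
    omega
  · -- case T = h
    have hdvd : T ∣ p - 1 := ⟨2, by omega⟩
    have := Nat.gcd_eq_left hdvd
    rw [Nat.Coprime] at hTcop
    omega
  · -- case T > h
    have hj1a : 1 ≤ 2 * h - T := by omega
    have hj1b : 2 * h - T < h := by omega
    set j1 : ℕ := 2 * h - T with hj1def
    have hj1odd : j1 % 2 = 1 := by omega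
    have h2h0 : ((2 * h : ℕ) : ZMod (p - 1)) = 0 := by
      rw [← hp1]; exact ZMod.natCast_self _
    push_cast at h2h0
    have hcastT : ((T : ℕ) : ZMod (p - 1)) = -((j1 : ℕ) : ZMod (p - 1)) := by
      have hTj : T + j1 = 2 * h := by omega
      have hTjc := congrArg (fun n : ℕ => ((n : ℕ) : ZMod (p - 1))) hTj
      push_cast at hTjc
      linear_combination hTjc + h2h0
    -- equation at (j1, 2h - 1) : gives g = h + 1
    have e1 := meq j1 (2 * h - 1) (by
      rw [← ZMod.natCast_eq_natCast_iff]
      push_cast [Nat.cast_sub (show 1 ≤ 2 * h by omega)]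
      rw [hcastT]
      linear_combination ((j1 : ℕ) : ZMod (p - 1)) * h2h0)
    have hQj1 : (2 : ZMod p) * P j1 = 1 := by
      have := key j1 (2 * h - j1) (by omega) (by omega) (by omega)
      rw [if_neg (by omega), Odd.neg_one_pow (Nat.odd_iff.mpr hj1odd), zero_sub, neg_neg] at this
      exact this
    have hQtop : (2 : ZMod p) * P (2 * h - 1) = ((h : ℕ) : ZMod p) + 1 := by
      have := key (2 * h - 1) 1 (by omega) (by omega) (by omega)
      rw [if_pos (by omega), Nat.choose_one_right,
        Odd.neg_one_pow (Nat.odd_iff.mpr (by omega))] at this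
      rw [this]; ring
    have hgeq : (1 : ZMod p) = g ^ (2 * h - 1) * (((h : ℕ) : ZMod p) + 1) := by
      linear_combination -hQj1 + 2 * e1 + g ^ (2 * h - 1) * hQtop
    have hgpow : g ^ (2 * h) = 1 := by
      rw [← hp1]; exact ZMod.pow_card_sub_one_eq_one hg
    have hgval : g = ((h : ℕ) : ZMod p) + 1 := by
      have hexp : 2 * h - 1 + 1 = 2 * h := by omega
      have hstep : g * (g ^ (2 * h - 1) * (((h : ℕ) : ZMod p) + 1))
          = g ^ (2 * h) * (((h : ℕ) : ZMod p) + 1) := by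
        rw [← mul_assoc, ← pow_succ', hexp]
      calc g = g * 1 := (mul_one g).symm
        _ = g * (g ^ (2 * h - 1) * (((h : ℕ) : ZMod p) + 1)) := by rw [← hgeq]
        _ = g ^ (2 * h) * (((h : ℕ) : ZMod p) + 1) := hstep
        _ = ((h : ℕ) : ZMod p) + 1 := by rw [hgpow, one_mul]
    have h2g : (2 : ZMod p) * g = 1 := by
      rw [hgval]
      linear_combination hc
    -- subcases on 2 * j1 vs h
    rcases lt_trichotomy (2 * j1) h with hjj | hjj | hjj
    · -- 2 j1 < h : equation at (2 j1, 2h - 2)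
      have e2 := meq (2 * j1) (2 * h - 2) (by
        rw [← ZMod.natCast_eq_natCast_iff]
        push_cast [Nat.cast_sub (show 2 ≤ 2 * h by omega)]
        rw [hcastT]
        linear_combination ((j1 : ℕ) : ZMod (p - 1)) * h2h0)
      have hQ2j1 : (2 : ZMod p) * P (2 * j1) = -1 := by
        have := key (2 * j1) (2 * h - 2 * j1) (by omega) (by omega) (by omega)
        rw [if_neg (by omega), Even.neg_one_pow ⟨j1, by omega⟩, zero_sub] at this
        exact this
      have hQb : (2 : ZMod p) * P (2 * h - 2)
          = ((h.choose 2 : ℕ) : ZMod p) - 1 := by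
        have := key (2 * h - 2) 2 (by omega) (by omega) (by omega)
        rw [if_pos (by omega), Even.neg_one_pow ⟨h - 1, by omega⟩] at this
        exact this
      have hgc : -(g ^ 2) = ((h.choose 2 : ℕ) : ZMod p) - 1 := by
        have estep : (2 : ZMod p) * P (2 * j1)
            = g ^ (2 * h - 2) * ((2 : ZMod p) * P (2 * h - 2)) := by
          rw [e2]; ring
        rw [hQ2j1, hQb] at estep
        have hgpow2 : g ^ 2 * g ^ (2 * h - 2) = 1 := by
          rw [← pow_add, show 2 + (2 * h - 2) = 2 * h by omega]
          exact hgpow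
        linear_combination g ^ 2 * estep + (((h.choose 2 : ℕ) : ZMod p) - 1) * hgpow2
      have hCnat : 2 * h.choose 2 = h * (h - 1) := by
        obtain ⟨u, hu⟩ : ∃ u, h = u + 1 := ⟨h - 1, by omega⟩
        subst hu
        rw [Nat.choose_two_right]
        rw [Nat.mul_div_cancel']
        obtain ⟨c, hcc⟩ := Nat.even_mul_succ_self u
        have huu : (u + 1) * (u + 1 - 1) = u * (u + 1) := by
          rw [Nat.add_sub_cancel]; ring
        rw [huu]
        exact ⟨c, by omega⟩
      have hC8 : (8 : ZMod p) * ((h.choose 2 : ℕ) : ZMod p) = 3 := by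
        have hcast := congrArg (fun n : ℕ => ((n : ℕ) : ZMod p)) hCnat
        push_cast [Nat.cast_sub (show 1 ≤ h by omega)] at hcast
        linear_combination (4 : ZMod p) * hcast + (2 * ((h : ℕ) : ZMod p) - 3) * hc
      have h30 : ((3 : ℕ) : ZMod p) = 0 := by
        push_cast
        linear_combination 8 * hgc + hC8 + (4 * g + 2) * h2g
      have := Nat.le_of_dvd (by norm_num) ((ZMod.natCast_eq_zero_iff _ _).mp h30)
      omega
    · -- 2 j1 = h
      have hdvd : j1 ∣ p - 1 := ⟨4, by omega⟩
      have hj1cop : Nat.Coprime j1 (p - 1) := by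
        have hval : ((j1 : ℕ) : ZMod (p - 1)).val = j1 := ZMod.val_cast_of_lt (by omega)
        have hcasteq : ((j1 : ℕ) : ZMod (p - 1)) = ((-t : (ZMod (p - 1))ˣ) : ZMod (p - 1)) := by
          rw [Units.val_neg]
          have hx := hcastT
          rw [hTdef, ZMod.natCast_val, ZMod.cast_id] at hx
          linear_combination hx
        rw [hcasteq] at hval
        have := ZMod.val_coe_unit_coprime (-t)
        rwa [hval] at this
      have := Nat.gcd_eq_left hdvd
      rw [Nat.Coprime] at hj1cop
      omega
    · -- 2 j1 > h : equation at (2h - 2j1, 2)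
      have e2 := meq (2 * h - 2 * j1) 2 (by
        rw [← ZMod.natCast_eq_natCast_iff]
        push_cast [Nat.cast_sub (show 2 * j1 ≤ 2 * h by omega)]
        rw [hcastT]
        linear_combination h2h0)
      have hQa : (2 : ZMod p) * P (2 * h - 2 * j1) = -1 := by
        have := key (2 * h - 2 * j1) (2 * j1) (by omega) (by omega) (by omega)
        rw [if_neg (by omega), Even.neg_one_pow ⟨h - j1, by omega⟩, zero_sub] at this
        exact this
      have hg2 : g ^ 2 = 1 := by
        have estep : (2 : ZMod p) * P (2 * h - 2 * j1)
            = g ^ 2 * ((2 : ZMod p) * P 2) := by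
          rw [e2]; ring
        rw [hQa, hQ2] at estep
        linear_combination estep
      have h30 : ((3 : ℕ) : ZMod p) = 0 := by
        push_cast
        linear_combination (-4 : ZMod p) * hg2 + (2 * g + 1) * h2g
      have := Nat.le_of_dvd (by norm_num) ((ZMod.natCast_eq_zero_iff _ _).mp h30)
      omega
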